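/- For every integer p and all natural numbers q, r, the determinant c(p,q,r) is given by the closed formula c(p,q,r) = 3p²·q·r + (3p² − 2p)·r + (3p² − 2p)·q + (3p² − 4p + 1). -/
import Mathlib


/-- Entry function for the matrix `C(p,q,r)` from the paper. -/
def Cent (p : ℤ) (q r : ℕ) (i j : ℕ) : ℤ :=
  if i = j ∧ i ≤ 1 then 1 - 2 * p
  else if i ≤ 1 ∧ j ≤ 1 then p
  else if 2 ≤ i ∧ i = j then 2
  else if 2 ≤ min i j ∧ max i j ≤ 1 + q ∧ max i j = min i j + 1 then -1
  else if 2 + q ≤ min i j ∧ max i j ≤ 1 + q + r ∧ max i j = min i j + 1 then -1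
  else if 1 ≤ q ∧ ((i = 1 ∧ j = 2) ∨ (i = 2 ∧ j = 1)) then -1
  else if 1 ≤ r ∧ ((i = 0 ∧ j = 2 + q) ∨ (i = 2 + q ∧ j = 0)) then -1
  else 0

/-- The matrix `C(p,q,r)`: a symmetric `(2+q+r) × (2+q+r)` integer matrix. -/
def Cmat (p : ℤ) (q r : ℕ) : Matrix (Fin (2 + q + r)) (Fin (2 + q + r)) ℤ :=
  fun i j => Cent p q r i.val j.val

/-- `c(p,q,r) = det C(p,q,r)`. -/
def cdet (p : ℤ) (q r : ℕ) : ℤ := (Cmat p q r).det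

/-! ### Auxiliary definitions -/

/-- A flexible-size version of `Cmat`. -/
def CmatN (p : ℤ) (q r n : ℕ) : Matrix (Fin n) (Fin n) ℤ :=
  fun i j => Cent p q r i.val j.val

/-- Entries of the auxiliary tridiagonal matrix `E`. -/
def Eent (p : ℤ) (i j : ℕ) : ℤ :=
  if i = j ∧ i = 0 then 1 - 2 * p
  else if i = j then 2
  else if max i j = min i j + 1 then -1
  else 0

/-- The auxiliary tridiagonal matrix `E`. -/
def Emat (p : ℤ) (q : ℕ) : Matrix (Fin (q+1)) (Fin (q+1)) ℤ := fun i j => Eent p i.val j.val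

lemma succAbove_val' {n : ℕ} (k : Fin (n+1)) (j : Fin n) :
    (k.succAbove j).val = if j.val < k.val then j.val else j.val + 1 := by
  rw [Fin.succAbove]; split_ifs with h h' h' <;> simp_all [Fin.lt_def]

/-- Cofactor expansion along the last row when it has (at most) two nonzero entries. -/
lemma det_two_last {n : ℕ} (A : Matrix (Fin (n+1)) (Fin (n+1)) ℤ) (k : Fin (n+1))
    (hk : k ≠ Fin.last n)
    (h0 : ∀ j, j ≠ k → j ≠ Fin.last n → A (Fin.last n) j = 0) :
    A.det = A (Fin.last n) (Fin.last n) * (A.submatrix Fin.castSucc Fin.castSucc).det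
      + (-1)^(n + k.val) * A (Fin.last n) k * (A.submatrix Fin.castSucc k.succAbove).det := by
  rw [Matrix.det_succ_row A (Fin.last n),
    ← Finset.sum_subset (Finset.subset_univ ({k, Fin.last n} : Finset (Fin (n+1))))
      (fun j _ hj => by
        simp only [Finset.mem_insert, Finset.mem_singleton, not_or] at hj
        rw [h0 j hj.1 hj.2]; ring)]
  rw [Finset.sum_pair hk]
  simp only [Fin.succAbove_last, Fin.val_last]
  rw [show ((-1:ℤ))^(n + n) = 1 from Even.neg_one_pow ⟨n, rfl⟩]
  ring

/-- Cofactor expansion along the last column when its only nonzero entry is in the last row. -/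
lemma det_col_lastrow {n : ℕ} (A : Matrix (Fin (n+1)) (Fin (n+1)) ℤ)
    (h0 : ∀ i, i ≠ Fin.last n → A i (Fin.last n) = 0) :
    A.det = A (Fin.last n) (Fin.last n) * (A.submatrix Fin.castSucc Fin.castSucc).det := by
  rw [Matrix.det_succ_column A (Fin.last n),
    Finset.sum_eq_single (Fin.last n) (fun i _ hi => by rw [h0 i hi]; ring)
      (fun h => absurd (Finset.mem_univ _) h)]
  simp only [Fin.succAbove_last, Fin.val_last]
  rw [show ((-1:ℤ))^(n + n) = 1 from Even.neg_one_pow ⟨n, rfl⟩]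
  ring

/-- Cofactor expansion along the last column when its only nonzero entry is in row `0`. -/
lemma det_col_rowzero {n : ℕ} (A : Matrix (Fin (n+1)) (Fin (n+1)) ℤ)
    (h0 : ∀ i, i ≠ 0 → A i (Fin.last n) = 0) :
    A.det = (-1)^n * A 0 (Fin.last n) * (A.submatrix Fin.succ Fin.castSucc).det := by
  rw [Matrix.det_succ_column A (Fin.last n),
    Finset.sum_eq_single 0 (fun i _ hi => by rw [h0 i hi]; ring)
      (fun h => absurd (Finset.mem_univ _) h)]
  rw [show ((0:Fin (n+1)).succAbove) = Fin.succ from funext Fin.zero_succAbove]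
  simp only [Fin.succAbove_last, Fin.val_last, Fin.val_zero, zero_add]

lemma cent_r_succ {p : ℤ} {q r i j : ℕ} (hi : i ≤ 1+q+r) (hj : j ≤ 1+q+r) :
    Cent p q (r+1) i j = Cent p q r i j := by
  unfold Cent; split_ifs <;> first | omega | (simp_all only [false_and, and_false, true_and, and_true, not_false_eq_true, not_true, or_false, false_or]; try omega)

lemma cent_q_succ {p : ℤ} {q i j : ℕ} (hi : i ≤ 1+q) (hj : j ≤ 1+q) :
    Cent p (q+1) 0 i j = Cent p q 0 i j := by
  unfold Cent; split_ifs <;> first | omega | (simp_all only [false_and, and_false, true_and, and_true, not_false_eq_true, not_true, or_false, false_or]; try omega)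

lemma cent_e {p : ℤ} {q i j : ℕ} (hi : i ≤ q) (hj : j ≤ q) :
    Cent p q 1 (i+1) (j+1) = Eent p i j := by
  simp only [Cent, Eent]; split_ifs <;> first | omega | tauto


/-- Determinant of the auxiliary matrix `E`. -/
lemma det_Emat (p : ℤ) (q : ℕ) : (Emat p q).det = 1 - 2*p - 2*p*q := by
  induction q using Nat.twoStepInduction with
  | zero =>
    rw [show (Emat p 0).det = Emat p 0 0 0 from Matrix.det_fin_one _]
    norm_num [Emat, Eent]
  | one =>
    rw [Matrix.det_fin_two (Emat p 1)]
    norm_num [Emat, Eent]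
    ring
  | more q ih1 ih2 =>
    have hstep : (Emat p (q+2)).det = 2 * (Emat p (q+1)).det - (Emat p q).det := by
      have hval : ∀ m : Fin (q+3), m.val ≤ q + 2 := fun m => Nat.lt_succ_iff.mp m.isLt
      rw [det_two_last (Emat p (q+2)) ⟨q+1, by omega⟩ (by simp [Fin.ext_iff])
        (fun j hj hj' => by
          have h1 : j.val ≠ q+1 := fun h => hj (Fin.ext h)
          have h2 : j.val ≠ q+2 := fun h => hj' (Fin.ext h)
          have h3 := hval j
          simp only [Emat, Eent, Fin.val_last]
          split_ifs <;> first | omega | tauto)]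
      have hml : (Emat p (q+2)).submatrix Fin.castSucc Fin.castSucc = Emat p (q+1) := by
        ext i j; rfl
      have hd : Emat p (q+2) (Fin.last (q+2)) (Fin.last (q+2)) = 2 := by
        show Eent p (q+2) (q+2) = 2
        simp only [Eent]; split_ifs <;> first | omega | tauto
      have he : Emat p (q+2) (Fin.last (q+2)) ⟨q+1, by omega⟩ = -1 := by
        show Eent p (q+2) (q+1) = -1
        simp only [Eent]; split_ifs <;> first | omega | tauto
      have hmk : ((Emat p (q+2)).submatrix Fin.castSucc (Fin.succAbove ⟨q+1, by omega⟩)).det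
          = - (Emat p q).det := by
        rw [det_col_lastrow _ (fun i hi => by
          have h1 : i.val ≠ q+1 := fun h => hi (Fin.ext h)
          have h2 : i.val ≤ q+1 := Nat.lt_succ_iff.mp i.isLt
          have hc : ((Fin.succAbove ⟨q+1, by omega⟩) (Fin.last (q+1))).val = q+2 := by
            rw [succAbove_val']; simp
          simp only [Matrix.submatrix_apply, Emat, Eent, Fin.coe_castSucc, hc]
          split_ifs <;> first | omega | tauto)]
        have h1 : ((Emat p (q+2)).submatrix Fin.castSucc (Fin.succAbove ⟨q+1, by omega⟩)).submatrix
            Fin.castSucc Fin.castSucc = Emat p q := by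
          ext i j
          have hj : j.val < q+1 := j.isLt
          have hc : ((Fin.succAbove (⟨q+1, by omega⟩ : Fin (q+3))) (Fin.castSucc j)).val = j.val := by
            rw [succAbove_val']; simp only [Fin.coe_castSucc]; split <;> omega
          simp only [Matrix.submatrix_apply, Emat, Fin.coe_castSucc, hc]
        have h2 : ((Emat p (q+2)).submatrix Fin.castSucc (Fin.succAbove ⟨q+1, by omega⟩))
            (Fin.last (q+1)) (Fin.last (q+1)) = -1 := by
          have hc : ((Fin.succAbove (⟨q+1, by omega⟩ : Fin (q+3))) (Fin.last (q+1))).val = q+2 := by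
            rw [succAbove_val']; simp
          simp only [Matrix.submatrix_apply, Emat, Eent, Fin.coe_castSucc, hc, Fin.val_last]
          split_ifs <;> first | omega | tauto
        rw [h1, h2]; ring
      rw [hml, hd, he, hmk]
      have hs : ((-1:ℤ))^(q+2 + (q+1)) = -1 := Odd.neg_one_pow ⟨q+1, by ring⟩
      rw [hs]; ring
    rw [hstep, ih1, ih2]; push_cast; ring

set_option maxHeartbeats 1600000 in
lemma step_A (p : ℤ) (q : ℕ) : (CmatN p (q+2) 0 (q+2+2)).det
        = 2 * (CmatN p (q+1) 0 (q+1+2)).det - (CmatN p q 0 (q+2)).det := by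
      have hz : ∀ j : Fin (q+4), j ≠ (⟨q+2, by omega⟩ : Fin (q+4)) → j ≠ Fin.last (q+3) →
          CmatN p (q+2) 0 (q+2+2) (Fin.last (q+3)) j = 0 := by
        intro j hj hj'
        have h1 : j.val ≠ q+2 := fun h => hj (Fin.ext h)
        have h2 : j.val ≠ q+3 := fun h => hj' (Fin.ext h)
        have h3 : j.val ≤ q+3 := Nat.lt_succ_iff.mp j.isLt
        show Cent p (q+2) 0 (q+3) j.val = 0
        unfold Cent; split_ifs <;> first | omega | (simp_all only [false_and, and_false, true_and, and_true, not_false_eq_true, not_true, or_false, false_or]; try omega)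
      rw [det_two_last (CmatN p (q+2) 0 (q+2+2)) ⟨q+2, by omega⟩ (by simp [Fin.ext_iff]) hz]
      have hml : (CmatN p (q+2) 0 (q+2+2)).submatrix Fin.castSucc Fin.castSucc
          = CmatN p (q+1) 0 (q+1+2) := by
        ext i j
        have hi : i.val ≤ q+2 := Nat.lt_succ_iff.mp i.isLt
        have hj : j.val ≤ q+2 := Nat.lt_succ_iff.mp j.isLt
        show Cent p (q+2) 0 i.val j.val = Cent p (q+1) 0 i.val j.val
        exact cent_q_succ (by omega) (by omega)
      have hd : CmatN p (q+2) 0 (q+2+2) (Fin.last (q+3)) (Fin.last (q+3)) = 2 := by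
        show Cent p (q+2) 0 (q+3) (q+3) = 2
        unfold Cent; split_ifs <;> first | omega | (simp_all only [false_and, and_false, true_and, and_true, not_false_eq_true, not_true, or_false, false_or]; try omega)
      have he : CmatN p (q+2) 0 (q+2+2) (Fin.last (q+3)) ⟨q+2, by omega⟩ = -1 := by
        show Cent p (q+2) 0 (q+3) (q+2) = -1
        unfold Cent; split_ifs <;> first | omega | (simp_all only [false_and, and_false, true_and, and_true, not_false_eq_true, not_true, or_false, false_or]; try omega)
      rw [hml, hd, he]
      have hmk : ((CmatN p (q+2) 0 (q+2+2)).submatrix Fin.castSucc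
          (Fin.succAbove (⟨q+2, by omega⟩ : Fin (q+4)))).det = - (CmatN p q 0 (q+2)).det := by
        have hz2 : ∀ i : Fin (q+3), i ≠ Fin.last (q+2) →
            ((CmatN p (q+2) 0 (q+2+2)).submatrix Fin.castSucc
              (Fin.succAbove (⟨q+2, by omega⟩ : Fin (q+4)))) i (Fin.last (q+2)) = 0 := by
          intro i hi
          have h1 : i.val ≠ q+2 := fun h => hi (Fin.ext h)
          have h2 : i.val ≤ q+2 := Nat.lt_succ_iff.mp i.isLt
          have hc : ((Fin.succAbove (⟨q+2, by omega⟩ : Fin (q+4))) (Fin.last (q+2))).val = q+3 := by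
            rw [succAbove_val']; simp
          show Cent p (q+2) 0 i.val ((Fin.succAbove (⟨q+2, by omega⟩ : Fin (q+4))) (Fin.last (q+2))).val = 0
          rw [hc]
          unfold Cent; split_ifs <;> first | omega | (simp_all only [false_and, and_false, true_and, and_true, not_false_eq_true, not_true, or_false, false_or]; try omega)
        rw [det_col_lastrow _ hz2]
        have h1 : (((CmatN p (q+2) 0 (q+2+2)).submatrix Fin.castSucc
            (Fin.succAbove (⟨q+2, by omega⟩ : Fin (q+4)))).submatrix
            Fin.castSucc Fin.castSucc) = CmatN p q 0 (q+2) := by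
          ext i j
          have hi : i.val ≤ q+1 := Nat.lt_succ_iff.mp i.isLt
          have hj : j.val < q+2 := j.isLt
          have hc : ((Fin.succAbove (⟨q+2, by omega⟩ : Fin (q+4))) (Fin.castSucc j)).val = j.val := by
            rw [succAbove_val']; simp only [Fin.coe_castSucc]; split <;> omega
          show Cent p (q+2) 0 i.val ((Fin.succAbove (⟨q+2, by omega⟩ : Fin (q+4))) (Fin.castSucc j)).val
              = Cent p q 0 i.val j.val
          rw [hc, cent_q_succ (q := q+1) (by omega) (by omega),
            cent_q_succ (by omega) (by omega)]
        have h2 : ((CmatN p (q+2) 0 (q+2+2)).submatrix Fin.castSucc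
            (Fin.succAbove (⟨q+2, by omega⟩ : Fin (q+4))))
            (Fin.last (q+2)) (Fin.last (q+2)) = -1 := by
          have hc : ((Fin.succAbove (⟨q+2, by omega⟩ : Fin (q+4))) (Fin.last (q+2))).val = q+3 := by
            rw [succAbove_val']; simp
          show Cent p (q+2) 0 (q+2) ((Fin.succAbove (⟨q+2, by omega⟩ : Fin (q+4))) (Fin.last (q+2))).val = -1
          rw [hc]
          unfold Cent; split_ifs <;> first | omega | (simp_all only [false_and, and_false, true_and, and_true, not_false_eq_true, not_true, or_false, false_or]; try omega)
        rw [h1, h2]; ring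
      rw [hmk]
      have hs : ((-1:ℤ))^(q+3 + (q+2)) = -1 := Odd.neg_one_pow ⟨q+2, by ring⟩
      rw [hs]; ring

/-- Determinant of `C(p,q,0)`. -/
lemma det_A (p : ℤ) (q : ℕ) :
    (CmatN p q 0 (q+2)).det = (3*p^2 - 2*p)*q + (3*p^2 - 4*p + 1) := by
  induction q using Nat.twoStepInduction with
  | zero =>
    rw [Matrix.det_fin_two (CmatN p 0 0 2)]
    show Cent p 0 0 0 0 * Cent p 0 0 1 1 - Cent p 0 0 0 1 * Cent p 0 0 1 0 = _
    norm_num [Cent]; ring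
  | one =>
    rw [Matrix.det_fin_three (CmatN p 1 0 3)]
    show Cent p 1 0 0 0 * Cent p 1 0 1 1 * Cent p 1 0 2 2 -
        Cent p 1 0 0 0 * Cent p 1 0 1 2 * Cent p 1 0 2 1 -
        Cent p 1 0 0 1 * Cent p 1 0 1 0 * Cent p 1 0 2 2 +
        Cent p 1 0 0 1 * Cent p 1 0 1 2 * Cent p 1 0 2 0 +
        Cent p 1 0 0 2 * Cent p 1 0 1 0 * Cent p 1 0 2 1 -
        Cent p 1 0 0 2 * Cent p 1 0 1 1 * Cent p 1 0 2 0 = _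
    norm_num [Cent]; ring
  | more q ih1 ih2 =>
    rw [step_A, ih1, ih2]; push_cast; ring

set_option maxHeartbeats 1600000 in
lemma det_B (p : ℤ) (q : ℕ) :
    (CmatN p q 1 (q+1+2)).det = 2 * (CmatN p q 0 (q+2)).det - (Emat p q).det := by
  have hz : ∀ j : Fin (q+3), j ≠ 0 → j ≠ Fin.last (q+2) →
      CmatN p q 1 (q+1+2) (Fin.last (q+2)) j = 0 := by
    intro j hj hj'
    have h1 : j.val ≠ 0 := fun h => hj (Fin.ext h)
    have h2 : j.val ≠ q+2 := fun h => hj' (Fin.ext h)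
    have h3 : j.val ≤ q+2 := Nat.lt_succ_iff.mp j.isLt
    show Cent p q 1 (q+2) j.val = 0
    unfold Cent; split_ifs <;> first | omega | (simp_all only [false_and, and_false, true_and, and_true, not_false_eq_true, not_true, or_false, false_or]; try omega)
  rw [det_two_last (CmatN p q 1 (q+1+2)) 0 (by simp [Fin.ext_iff]) hz]
  have hml : (CmatN p q 1 (q+1+2)).submatrix Fin.castSucc Fin.castSucc
      = CmatN p q 0 (q+2) := by
    ext i j
    have hi : i.val ≤ q+1 := Nat.lt_succ_iff.mp i.isLt
    have hj : j.val ≤ q+1 := Nat.lt_succ_iff.mp j.isLt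
    show Cent p q 1 i.val j.val = Cent p q 0 i.val j.val
    exact cent_r_succ (by omega) (by omega)
  have hd : CmatN p q 1 (q+1+2) (Fin.last (q+2)) (Fin.last (q+2)) = 2 := by
    show Cent p q 1 (q+2) (q+2) = 2
    unfold Cent; split_ifs <;> first | omega | (simp_all only [false_and, and_false, true_and, and_true, not_false_eq_true, not_true, or_false, false_or]; try omega)
  have he : CmatN p q 1 (q+1+2) (Fin.last (q+2)) 0 = -1 := by
    show Cent p q 1 (q+2) ((0 : Fin (q+3)).val) = -1
    rw [Fin.val_zero]
    unfold Cent; split_ifs <;> first | omega | (simp_all only [false_and, and_false, true_and, and_true, not_false_eq_true, not_true, or_false, false_or]; try omega)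
  have hmk : ((CmatN p q 1 (q+1+2)).submatrix Fin.castSucc
      (Fin.succAbove (0 : Fin (q+3)))).det = (-1:ℤ)^(q+1) * (-1) * (Emat p q).det := by
    have hz2 : ∀ i : Fin (q+2), i ≠ 0 →
        ((CmatN p q 1 (q+1+2)).submatrix Fin.castSucc
          (Fin.succAbove (0 : Fin (q+3)))) i (Fin.last (q+1)) = 0 := by
      intro i hi
      have h1 : i.val ≠ 0 := fun h => hi (Fin.ext h)
      have h2 : i.val ≤ q+1 := Nat.lt_succ_iff.mp i.isLt
      have hc : ((Fin.succAbove (0 : Fin (q+3))) (Fin.last (q+1))).val = q+2 := by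
        rw [Fin.zero_succAbove]; simp
      show Cent p q 1 i.val ((Fin.succAbove (0 : Fin (q+3))) (Fin.last (q+1))).val = 0
      rw [hc]
      unfold Cent; split_ifs <;> first | omega | (simp_all only [false_and, and_false, true_and, and_true, not_false_eq_true, not_true, or_false, false_or]; try omega)
    rw [det_col_rowzero _ hz2]
    have h1 : (((CmatN p q 1 (q+1+2)).submatrix Fin.castSucc
        (Fin.succAbove (0 : Fin (q+3)))).submatrix Fin.succ Fin.castSucc) = Emat p q := by
      ext i j
      have hi : i.val ≤ q := Nat.lt_succ_iff.mp i.isLt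
      have hj : j.val ≤ q := Nat.lt_succ_iff.mp j.isLt
      have hc : ((Fin.succAbove (0 : Fin (q+3))) (Fin.castSucc j)).val = j.val + 1 := by
        rw [Fin.zero_succAbove]; simp
      show Cent p q 1 (Fin.castSucc (Fin.succ i)).val
          ((Fin.succAbove (0 : Fin (q+3))) (Fin.castSucc j)).val = Eent p i.val j.val
      rw [hc]
      show Cent p q 1 (i.val+1) (j.val+1) = Eent p i.val j.val
      exact cent_e hi hj
    have h2 : ((CmatN p q 1 (q+1+2)).submatrix Fin.castSucc
        (Fin.succAbove (0 : Fin (q+3)))) 0 (Fin.last (q+1)) = -1 := by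
      have hc : ((Fin.succAbove (0 : Fin (q+3))) (Fin.last (q+1))).val = q+2 := by
        rw [Fin.zero_succAbove]; simp
      show Cent p q 1 (Fin.castSucc (0 : Fin (q+2))).val
          ((Fin.succAbove (0 : Fin (q+3))) (Fin.last (q+1))).val = -1
      rw [hc]
      show Cent p q 1 ((0 : Fin (q+2)).val) (q+2) = -1
      rw [Fin.val_zero]
      unfold Cent; split_ifs <;> first | omega | (simp_all only [false_and, and_false, true_and, and_true, not_false_eq_true, not_true, or_false, false_or]; try omega)
    rw [h1, h2]
  rw [hml, hd, he, hmk]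
  simp only [Fin.val_zero]
  have hs : ((-1:ℤ))^(q+2+0) * ((-1:ℤ)^(q+1)) = -1 := by
    rw [← pow_add]; exact Odd.neg_one_pow ⟨q+1, by ring⟩
  linear_combination (Emat p q).det * hs

set_option maxHeartbeats 1600000 in
lemma det_R (p : ℤ) (q r : ℕ) :
    (CmatN p q (r+2) (q+(r+2)+2)).det
      = 2 * (CmatN p q (r+1) (q+(r+1)+2)).det - (CmatN p q r (q+r+2)).det := by
  show (CmatN p q (r+2) (q+r+4)).det
      = 2 * (CmatN p q (r+1) (q+r+3)).det - (CmatN p q r (q+r+2)).det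
  have hz : ∀ j : Fin (q+r+4), j ≠ (⟨q+r+2, by omega⟩ : Fin (q+r+4)) → j ≠ Fin.last (q+r+3) →
      CmatN p q (r+2) (q+r+4) (Fin.last (q+r+3)) j = 0 := by
    intro j hj hj'
    have h1 : j.val ≠ q+r+2 := fun h => hj (Fin.ext h)
    have h2 : j.val ≠ q+r+3 := fun h => hj' (Fin.ext h)
    have h3 : j.val ≤ q+r+3 := Nat.lt_succ_iff.mp j.isLt
    show Cent p q (r+2) (q+r+3) j.val = 0
    unfold Cent; split_ifs <;> first | omega | (simp_all only [false_and, and_false, true_and, and_true, not_false_eq_true, not_true, or_false, false_or]; try omega)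
  rw [det_two_last (CmatN p q (r+2) (q+r+4)) ⟨q+r+2, by omega⟩ (by simp [Fin.ext_iff]) hz]
  have hml : (CmatN p q (r+2) (q+r+4)).submatrix Fin.castSucc Fin.castSucc
      = CmatN p q (r+1) (q+r+3) := by
    ext i j
    have hi : i.val ≤ q+r+2 := Nat.lt_succ_iff.mp i.isLt
    have hj : j.val ≤ q+r+2 := Nat.lt_succ_iff.mp j.isLt
    show Cent p q (r+2) i.val j.val = Cent p q (r+1) i.val j.val
    exact cent_r_succ (q := q) (r := r+1) (by omega) (by omega)
  have hd : CmatN p q (r+2) (q+r+4) (Fin.last (q+r+3)) (Fin.last (q+r+3)) = 2 := by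
    show Cent p q (r+2) (q+r+3) (q+r+3) = 2
    unfold Cent; split_ifs <;> first | omega | (simp_all only [false_and, and_false, true_and, and_true, not_false_eq_true, not_true, or_false, false_or]; try omega)
  have he : CmatN p q (r+2) (q+r+4) (Fin.last (q+r+3)) ⟨q+r+2, by omega⟩ = -1 := by
    show Cent p q (r+2) (q+r+3) (q+r+2) = -1
    unfold Cent; split_ifs <;> first | omega | (simp_all only [false_and, and_false, true_and, and_true, not_false_eq_true, not_true, or_false, false_or]; try omega)
  have hmk : ((CmatN p q (r+2) (q+r+4)).submatrix Fin.castSucc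
      (Fin.succAbove (⟨q+r+2, by omega⟩ : Fin (q+r+4)))).det = - (CmatN p q r (q+r+2)).det := by
    have hz2 : ∀ i : Fin (q+r+3), i ≠ Fin.last (q+r+2) →
        ((CmatN p q (r+2) (q+r+4)).submatrix Fin.castSucc
          (Fin.succAbove (⟨q+r+2, by omega⟩ : Fin (q+r+4)))) i (Fin.last (q+r+2)) = 0 := by
      intro i hi
      have h1 : i.val ≠ q+r+2 := fun h => hi (Fin.ext h)
      have h2 : i.val ≤ q+r+2 := Nat.lt_succ_iff.mp i.isLt
      have hc : ((Fin.succAbove (⟨q+r+2, by omega⟩ : Fin (q+r+4))) (Fin.last (q+r+2))).val = q+r+3 := by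
        rw [succAbove_val']; simp
      show Cent p q (r+2) i.val
          ((Fin.succAbove (⟨q+r+2, by omega⟩ : Fin (q+r+4))) (Fin.last (q+r+2))).val = 0
      rw [hc]
      unfold Cent; split_ifs <;> first | omega | (simp_all only [false_and, and_false, true_and, and_true, not_false_eq_true, not_true, or_false, false_or]; try omega)
    rw [det_col_lastrow _ hz2]
    have h1 : (((CmatN p q (r+2) (q+r+4)).submatrix Fin.castSucc
        (Fin.succAbove (⟨q+r+2, by omega⟩ : Fin (q+r+4)))).submatrix
        Fin.castSucc Fin.castSucc) = CmatN p q r (q+r+2) := by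
      ext i j
      have hi : i.val ≤ q+r+1 := Nat.lt_succ_iff.mp i.isLt
      have hj : j.val < q+r+2 := j.isLt
      have hc : ((Fin.succAbove (⟨q+r+2, by omega⟩ : Fin (q+r+4))) (Fin.castSucc j)).val = j.val := by
        rw [succAbove_val']; simp only [Fin.coe_castSucc]; split <;> omega
      show Cent p q (r+2) i.val
          ((Fin.succAbove (⟨q+r+2, by omega⟩ : Fin (q+r+4))) (Fin.castSucc j)).val
          = Cent p q r i.val j.val
      rw [hc, cent_r_succ (q := q) (r := r+1) (by omega) (by omega),
        cent_r_succ (by omega) (by omega)]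
    have h2 : ((CmatN p q (r+2) (q+r+4)).submatrix Fin.castSucc
        (Fin.succAbove (⟨q+r+2, by omega⟩ : Fin (q+r+4))))
        (Fin.last (q+r+2)) (Fin.last (q+r+2)) = -1 := by
      have hc : ((Fin.succAbove (⟨q+r+2, by omega⟩ : Fin (q+r+4))) (Fin.last (q+r+2))).val = q+r+3 := by
        rw [succAbove_val']; simp
      show Cent p q (r+2) (q+r+2)
          ((Fin.succAbove (⟨q+r+2, by omega⟩ : Fin (q+r+4))) (Fin.last (q+r+2))).val = -1
      rw [hc]
      unfold Cent; split_ifs <;> first | omega | (simp_all only [false_and, and_false, true_and, and_true, not_false_eq_true, not_true, or_false, false_or]; try omega)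
    rw [h1, h2]; ring
  rw [hml, hd, he, hmk]
  have hs : ((-1:ℤ))^(q+r+3 + (q+r+2)) = -1 := Odd.neg_one_pow ⟨q+r+2, by ring⟩
  rw [hs]; ring

lemma cdet_eq (p : ℤ) (q r n : ℕ) (h : n = 2+q+r) : cdet p q r = (CmatN p q r n).det := by
  subst h; rfl

theorem c_closed_formula (p : ℤ) (q r : ℕ) :
    cdet p q r = 3 * p ^ 2 * (q * r) + (3 * p ^ 2 - 2 * p) * r
      + (3 * p ^ 2 - 2 * p) * q + (3 * p ^ 2 - 4 * p + 1) := by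
  rw [cdet_eq p q r (q+r+2) (by omega)]
  induction r using Nat.twoStepInduction with
  | zero =>
    show (CmatN p q 0 (q+2)).det = _
    rw [det_A]; push_cast; ring
  | one =>
    show (CmatN p q 1 (q+1+2)).det = _
    rw [det_B, det_A, det_Emat]; push_cast; ring
  | more r ih1 ih2 =>
    rw [det_R, ih1, ih2]
    push_cast; ring
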